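/- arXiv:1708.01213 — 3 statements merged into one kernel-verified Lean document; each statement's English description precedes it below -/
import Mathlib

section
/- Let k be a field, n a positive integer, M an n×n matrix over k, and c ∈ k such that c^j ≠ 1 for all integers j with 1 ≤ j ≤ n. If there exists an invertible n×n matrix P over k with P · M · P⁻¹ = c • M, then M is nilpotent; in fact M^n = 0. -/
open Polynomial Matrix

lemma coeff_comp_C_mul_X_aux {k : Type*} [CommRing k] (p : k[X]) (c : k) (i : ℕ) :
    (p.comp (C c * X)).coeff i = c ^ i * p.coeff i := by
  induction p using Polynomial.induction_on' with
  | add p q hp hq => simp [add_comp, hp, hq, mul_add]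
  | monomial m a =>
    rw [← C_mul_X_pow_eq_monomial]
    simp only [mul_comp, C_comp, X_pow_comp, mul_pow, ← C_pow, ← mul_assoc, ← C_mul,
      coeff_C_mul, coeff_X_pow]
    split_ifs with hmi
    · subst hmi; ring
    · ring

/-- Conjugation preserves the characteristic polynomial. -/
lemma charpoly_conj_aux' {k : Type*} [Field k] {n : ℕ}
    (Pm Q M : Matrix (Fin n) (Fin n) k) (hPQ : Pm * Q = 1) :
    (Pm * M * Q).charpoly = M.charpoly := by
  set Cm : Matrix (Fin n) (Fin n) k →+* Matrix (Fin n) (Fin n) k[X] :=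
    (C : k →+* k[X]).mapMatrix with hCm
  have hCPP : Cm Pm * Cm Q = 1 := by
    rw [← RingHom.map_mul, hPQ, RingHom.map_one]
  have hch : charmatrix (Pm * M * Q) = Cm Pm * charmatrix M * Cm Q := by
    unfold charmatrix
    rw [mul_sub, sub_mul, ← RingHom.map_mul, ← RingHom.map_mul]
    congr 1
    have hcomm : Cm Pm * Matrix.scalar (Fin n) (X : k[X])
        = Matrix.scalar (Fin n) (X : k[X]) * Cm Pm :=
      (Matrix.scalar_commute (X : k[X]) (fun a => Commute.all _ a) _).symm
    rw [hcomm, mul_assoc, hCPP, mul_one]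
  rw [Matrix.charpoly, hch, det_mul, det_mul, Matrix.charpoly]
  have hdet : det (Cm Pm) * det (Cm Q) = 1 := by
    rw [← det_mul, hCPP, det_one]
  calc det (Cm Pm) * (charmatrix M).det * det (Cm Q)
      = det (Cm Pm) * det (Cm Q) * (charmatrix M).det := by ring
    _ = (charmatrix M).det := by rw [hdet, one_mul]

/-- Conjugation by an invertible matrix preserves the characteristic polynomial. -/
lemma charpoly_conj_aux {k : Type*} [Field k] {n : ℕ}
    (P : GL (Fin n) k) (M : Matrix (Fin n) (Fin n) k) :
    ((P : Matrix (Fin n) (Fin n) k) * M *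
      ((P⁻¹ : GL (Fin n) k) : Matrix (Fin n) (Fin n) k)).charpoly = M.charpoly :=
  charpoly_conj_aux' _ _ _ P.mul_inv

lemma charpoly_smul_comp_aux {k : Type*} [Field k] {n : ℕ}
    (M : Matrix (Fin n) (Fin n) k) (c : k) :
    ((c • M).charpoly).comp (C c * X) = C (c ^ n) * M.charpoly := by
  have h1 : ((c • M).charpoly).comp (C c * X)
      = ((charmatrix (c • M)).map (compRingHom (C c * X))).det := by
    have := RingHom.map_det (compRingHom (C c * X)) (charmatrix (c • M))
    simpa [Matrix.charpoly, RingHom.mapMatrix_apply, coe_compRingHom] using this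
  have h2 : (charmatrix (c • M)).map (compRingHom (C c * X)) = C c • charmatrix M := by
    refine Matrix.ext fun i j => ?_
    have hmap : ((charmatrix (c • M)).map (compRingHom (C c * X))) i j
        = (charmatrix (c • M) i j).comp (C c * X) := rfl
    have hsmul : (C c • charmatrix M) i j = C c * charmatrix M i j := rfl
    rw [hmap, hsmul]
    by_cases hij : i = j
    · subst hij
      rw [charmatrix_apply_eq, charmatrix_apply_eq, sub_comp, X_comp, C_comp, mul_sub, ← C_mul,
        Matrix.smul_apply, smul_eq_mul]
    · rw [charmatrix_apply_ne _ _ _ hij, charmatrix_apply_ne _ _ _ hij, neg_comp, C_comp,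
        Matrix.smul_apply, smul_eq_mul, mul_neg, ← C_mul]
  rw [h1, h2, det_smul, Fintype.card_fin, ← C_pow]
  rfl

/-- Over a field, if `P * M * P⁻¹ = c • M` for some invertible `P` and `c^j ≠ 1` for
`1 ≤ j ≤ n`, then `M` is nilpotent; in fact `M ^ n = 0`. -/
theorem nilpotent_of_conj_smul_of_pow_ne_one
    {k : Type*} [Field k] {n : ℕ} (hn : 0 < n)
    (M : Matrix (Fin n) (Fin n) k) (c : k)
    (hc : ∀ j : ℕ, 1 ≤ j → j ≤ n → c ^ j ≠ 1)
    (h : ∃ P : GL (Fin n) k,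
      (P : Matrix (Fin n) (Fin n) k) * M * ((P⁻¹ : GL (Fin n) k) : Matrix (Fin n) (Fin n) k)
        = c • M) :
    IsNilpotent M ∧ M ^ n = 0 := by
  obtain ⟨P, hP⟩ := h
  suffices hMn : M ^ n = 0 from ⟨⟨n, hMn⟩, hMn⟩
  by_cases hc0 : c = 0
  · -- c = 0: then P M P⁻¹ = 0, so M = 0
    subst hc0
    rw [zero_smul] at hP
    have hM : M = 0 := by
      have h1 : ((P⁻¹ : GL (Fin n) k) : Matrix (Fin n) (Fin n) k) *
          ((P : Matrix (Fin n) (Fin n) k) * M *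
            ((P⁻¹ : GL (Fin n) k) : Matrix (Fin n) (Fin n) k)) *
          (P : Matrix (Fin n) (Fin n) k) = M := by
        have hPP : (P : Matrix (Fin n) (Fin n) k) * ((P⁻¹ : GL (Fin n) k) : _) = 1 := by
          rw [← Units.val_mul, mul_inv_cancel, Units.val_one]
        have hPP' : ((P⁻¹ : GL (Fin n) k) : Matrix (Fin n) (Fin n) k) *
            (P : Matrix (Fin n) (Fin n) k) = 1 := by
          rw [← Units.val_mul, inv_mul_cancel, Units.val_one]
        calc ((P⁻¹ : GL (Fin n) k) : Matrix (Fin n) (Fin n) k) *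
              ((P : Matrix (Fin n) (Fin n) k) * M *
                ((P⁻¹ : GL (Fin n) k) : Matrix (Fin n) (Fin n) k)) *
              (P : Matrix (Fin n) (Fin n) k)
            = (((P⁻¹ : GL (Fin n) k) : Matrix (Fin n) (Fin n) k) *
                (P : Matrix (Fin n) (Fin n) k)) * M *
              (((P⁻¹ : GL (Fin n) k) : Matrix (Fin n) (Fin n) k) *
                (P : Matrix (Fin n) (Fin n) k)) := by
              simp only [Matrix.mul_assoc]
          _ = M := by rw [hPP', one_mul, mul_one]
      rw [hP] at h1
      simpa using h1.symm
    rw [hM, zero_pow hn.ne']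
  -- main case: c ≠ 0
  have key : (M.charpoly).comp (C c * X) = C (c ^ n) * M.charpoly := by
    rw [← charpoly_conj_aux P M, hP, charpoly_smul_comp_aux, ← hP, charpoly_conj_aux]
  have hcoeff : ∀ i : ℕ, i < n → M.charpoly.coeff i = 0 := by
    intro i hi
    have := congrArg (fun p => Polynomial.coeff p i) key
    simp only [coeff_comp_C_mul_X_aux, coeff_C_mul] at this
    have hne : c ^ i ≠ c ^ n := by
      intro heq
      have hin : i + (n - i) = n := by omega
      have h1 : c ^ i * c ^ (n - i) = c ^ i * 1 := by
        rw [← pow_add, hin, mul_one, heq]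
      exact hc (n - i) (by omega) (by omega) (mul_left_cancel₀ (pow_ne_zero i hc0) h1)
    have : (c ^ i - c ^ n) * M.charpoly.coeff i = 0 := by
      rw [sub_mul, this, sub_self]
    rcases mul_eq_zero.mp this with h' | h'
    · exact absurd (sub_eq_zero.mp h') hne
    · exact h'
  have hcp : M.charpoly = X ^ n := by
    have hmonic := M.charpoly_monic
    have hdeg : M.charpoly.natDegree = n := by
      simpa using M.charpoly_natDegree_eq_dim
    ext j
    rcases lt_trichotomy j n with hj | hj | hj
    · rw [hcoeff j hj, coeff_X_pow]
      simp [Nat.ne_of_lt hj]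
    · subst hj
      have := hmonic.coeff_natDegree
      rw [hdeg] at this
      rw [coeff_X_pow, if_pos rfl]
      exact this
    · rw [coeff_X_pow, if_neg (Nat.ne_of_gt hj)]
      exact Polynomial.coeff_eq_zero_of_natDegree_lt (by rw [hdeg]; exact hj)
  have := M.aeval_self_charpoly
  rw [hcp] at this
  simpa using this
end

section
/- Let R be a reduced commutative ring, M a finitely generated projective R-module, and φ an R-linear endomorphism of M. Suppose that the set of primes p ∈ Spec R for which the induced endomorphism φ ⊗ id on the fiber M ⊗_R κ(p) is zero (where κ(p) denotes the residue field of the local ring R_p) is dense in Spec R with the Zariski topology. Then φ = 0. -/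
/-!
Since `M` is projective, its elements are separated by linear functionals, so it suffices that
every scalar `a = f (φ m)` vanishes. Its image in `κ(p)` is zero, i.e. `a ∈ p`, for the primes `p`
of the dense set, so the open set `D(a)` misses a dense set and is empty: `a` is nilpotent, hence
zero because `R` is reduced.
-/

open TensorProduct

theorem LinearMap.algebraMap_apply_eq_zero_of_baseChange_eq_zero {R A M : Type*} [CommRing R]
    [CommRing A] [Algebra R A] [AddCommGroup M] [Module R M] {g : M →ₗ[R] R}
    (hg : g.baseChange A = 0) (m : M) : algebraMap R A (g m) = 0 := by
  have h : (1 : A) ⊗ₜ[R] g m = 0 := by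
    simpa using LinearMap.congr_fun hg (1 ⊗ₜ m)
  simpa [Algebra.algebraMap_eq_smul_one] using congrArg (TensorProduct.rid R A) h

theorem PrimeSpectrum.eq_zero_of_forall_mem_of_dense {R : Type*} [CommRing R] [IsReduced R]
    {s : Set (PrimeSpectrum R)} (hs : Dense s) {a : R} (ha : ∀ p ∈ s, a ∈ p.asIdeal) :
    a = 0 := by
  by_contra ha₀
  have hne : (basicOpen a : Set (PrimeSpectrum R)).Nonempty := by
    by_contra hempty
    rw [TopologicalSpace.Opens.not_nonempty_iff_eq_bot, basicOpen_eq_bot_iff] at hempty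
    exact ha₀ hempty.eq_zero
  obtain ⟨p, hpa, hps⟩ := hs.inter_open_nonempty _ (basicOpen a).isOpen hne
  exact hpa (ha p hps)

theorem endomorphism_eq_zero_of_fiberwise_zero_on_dense_general
    {R : Type*} [CommRing R] [IsReduced R]
    {M : Type*} [AddCommGroup M] [Module R M] [Module.Projective R M]
    (φ : M →ₗ[R] M)
    (hdense : Dense {p : PrimeSpectrum R |
      LinearMap.baseChange (IsLocalRing.ResidueField (Localization.AtPrime p.asIdeal)) φ = 0}) :
    φ = 0 := by
  ext m
  rw [LinearMap.zero_apply, ← Module.forall_dual_apply_eq_zero_iff R]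
  intro f
  refine PrimeSpectrum.eq_zero_of_forall_mem_of_dense hdense fun p hp ↦ ?_
  rw [← Ideal.algebraMap_residueField_eq_zero, ← LinearMap.comp_apply]
  refine LinearMap.algebraMap_apply_eq_zero_of_baseChange_eq_zero ?_ m
  rw [LinearMap.baseChange_comp, hp, LinearMap.comp_zero]

/-- An endomorphism of a finite projective module over a reduced commutative ring which
vanishes on the fibers `M ⊗ κ(p)` over a Zariski dense set of primes `p` is zero. -/
theorem endomorphism_eq_zero_of_fiberwise_zero_on_dense
    {R : Type*} [CommRing R] [IsReduced R]
    {M : Type*} [AddCommGroup M] [Module R M] [Module.Finite R M] [Module.Projective R M]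
    (φ : M →ₗ[R] M)
    (hdense : Dense {p : PrimeSpectrum R |
      LinearMap.baseChange (IsLocalRing.ResidueField (Localization.AtPrime p.asIdeal)) φ = 0}) :
    φ = 0 :=
  endomorphism_eq_zero_of_fiberwise_zero_on_dense_general φ hdense
end

section
/- Let p be an odd prime, n a positive integer, and α an n×n matrix over the p-adic integers ℤ_p of the form α = 1 + p • X for some X ∈ Mₙ(ℤ_p). Then there exists a continuous map f : ℤ_p → Mₙ(ℤ_p) (where Mₙ(ℤ_p) carries the product of the p-adic topologies on its entries) such that f(0) = 1, f(s + t) = f(s) · f(t) for all s, t ∈ ℤ_p, and f(1) = α. In particular f(k) = α^k for every natural number k, and each f(t) is an invertible matrix. -/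
open Filter Finset

/-- For an odd prime `p`, a matrix `α = 1 + p • X` over `ℤ_p` admits continuous `ℤ_p`-powers:
there is a continuous map `f : ℤ_p → Mₙ(ℤ_p)` with `f 0 = 1`, `f (s+t) = f s * f t`,
`f 1 = α`, `f k = α ^ k` for natural numbers `k`, and each `f t` invertible. -/
theorem exists_continuous_padic_powers
    {p : ℕ} [Fact p.Prime] (hp : p ≠ 2) {n : ℕ}
    (X α : Matrix (Fin n) (Fin n) ℤ_[p]) (hα : α = 1 + (p : ℤ_[p]) • X) :
    ∃ f : ℤ_[p] → Matrix (Fin n) (Fin n) ℤ_[p],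
      Continuous f ∧ f 0 = 1 ∧ (∀ s t : ℤ_[p], f (s + t) = f s * f t) ∧ f 1 = α ∧
        (∀ k : ℕ, f (k : ℤ_[p]) = α ^ k) ∧ (∀ t : ℤ_[p], IsUnit (f t)) := by
  classical
  have hpp : p.Prime := Fact.out
  have hp2 : 2 ≤ p := hpp.two_le
  have hpR : (1 : ℝ) < (p : ℝ) := by exact_mod_cast hpp.one_lt
  have hpR0 : (0 : ℝ) < (p : ℝ) := lt_trans one_pos hpR
  -- entrywise divisibility by powers of p
  let d : ℕ → Matrix (Fin n) (Fin n) ℤ_[p] → Prop := fun M β => ∀ i j, (p : ℤ_[p]) ^ M ∣ β i j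
  have dmono : ∀ {M M' : ℕ} {β : Matrix (Fin n) (Fin n) ℤ_[p]}, M' ≤ M → d M β → d M' β := by
    intro M M' β h hd i j
    exact dvd_trans (pow_dvd_pow _ h) (hd i j)
  have dmul_left : ∀ {M : ℕ} {β : Matrix (Fin n) (Fin n) ℤ_[p]} (γ : Matrix (Fin n) (Fin n) ℤ_[p]), d M β → d M (γ * β) := by
    intro M β γ hd i j
    rw [Matrix.mul_apply]
    exact Finset.dvd_sum fun l _ => (hd l j).mul_left _
  have dmul_right : ∀ {M : ℕ} {β : Matrix (Fin n) (Fin n) ℤ_[p]} (γ : Matrix (Fin n) (Fin n) ℤ_[p]), d M β → d M (β * γ) := by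
    intro M β γ hd i j
    rw [Matrix.mul_apply]
    exact Finset.dvd_sum fun l _ => (hd i l).mul_right _
  have dmul : ∀ {M N : ℕ} {β γ : Matrix (Fin n) (Fin n) ℤ_[p]}, d M β → d N γ → d (M + N) (β * γ) := by
    intro M N β γ hb hc i j
    rw [Matrix.mul_apply, pow_add]
    exact Finset.dvd_sum fun l _ => mul_dvd_mul (hb i l) (hc l j)
  have dadd : ∀ {M : ℕ} {β γ : Matrix (Fin n) (Fin n) ℤ_[p]}, d M β → d M γ → d M (β + γ) := by
    intro M β γ hb hc i j
    exact dvd_add (hb i j) (hc i j)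
  have dpow1 : ∀ {M : ℕ} {δ : Matrix (Fin n) (Fin n) ℤ_[p]}, d M δ → ∀ k : ℕ, d M (δ ^ (k + 1)) := by
    intro M δ hd k
    rw [pow_succ]
    exact dmul_left _ hd
  have dgeom : ∀ {M : ℕ} {β : Matrix (Fin n) (Fin n) ℤ_[p]}, d M (β - 1) → ∀ k : ℕ, d M (β ^ k - 1) := by
    intro M β hd k
    induction k with
    | zero => intro i j; simp [Matrix.zero_apply]
    | succ k ih =>
      have h : β ^ (k + 1) - 1 = β ^ k * (β - 1) + (β ^ k - 1) := by noncomm_ring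
      rw [h]
      exact dadd (dmul_left _ hd) ih
  have dnat : ∀ c : ℕ, p ∣ c → d 1 ((c : Matrix (Fin n) (Fin n) ℤ_[p])) := by
    intro c hc i j
    rw [← Matrix.diagonal_natCast, Matrix.diagonal_apply, pow_one]
    split
    · exact_mod_cast (Nat.cast_dvd_cast hc : ((p : ℕ) : ℤ_[p]) ∣ ((c : ℕ) : ℤ_[p]))
    · exact dvd_zero _
  -- core congruence: α ^ (p ^ M) ≡ 1 mod p ^ (M+1)
  have core : ∀ M : ℕ, d (M + 1) (α ^ p ^ M - 1) := by
    intro M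
    induction M with
    | zero =>
      intro i j
      have h1 : α ^ p ^ 0 - 1 = (p : ℤ_[p]) • X := by
        rw [pow_zero, pow_one, hα, add_sub_cancel_left]
      rw [h1, Matrix.smul_apply, smul_eq_mul, pow_one]
      exact Dvd.intro _ rfl
    | succ M ih =>
      set δ : Matrix (Fin n) (Fin n) ℤ_[p] := α ^ p ^ M - 1 with hδ
      have hβ : α ^ p ^ (M + 1) = (δ + 1) ^ p := by
        rw [pow_succ, pow_mul, hδ, sub_add_cancel]
      have hexp : (δ + 1) ^ p = ∑ m ∈ range (p + 1), δ ^ m * 1 ^ (p - m) * (p.choose m : Matrix (Fin n) (Fin n) ℤ_[p]) :=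
        (Commute.one_right δ).add_pow p
      have hterm : ∀ k ∈ range p,
          d (M + 2) (δ ^ (k + 1) * 1 ^ (p - (k + 1)) * (p.choose (k + 1) : Matrix (Fin n) (Fin n) ℤ_[p])) := by
        intro k hk
        rw [one_pow, mul_one]
        rcases lt_or_eq_of_le (Nat.succ_le_of_lt (Finset.mem_range.mp hk)) with hlt | heq
        · -- 1 ≤ k+1 < p : p divides the binomial coefficient
          have hC : p ∣ p.choose (k + 1) := hpp.dvd_choose_self (Nat.succ_ne_zero k) hlt
          have hh := dmul (dpow1 ih k) (dnat _ hC)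
          exact hh
        · -- k+1 = p : δ ^ p with p ≥ 2
          have heq' : k + 1 = p := heq
          rw [heq', Nat.choose_self, Nat.cast_one, mul_one]
          have hsplit : δ ^ p = δ * δ * δ ^ (p - 2) := by
            rw [mul_assoc, ← pow_succ', ← pow_succ']
            congr 1
            omega
          rw [hsplit]
          exact dmono (by omega) (dmul_right (δ ^ (p - 2)) (dmul ih ih))
      have key : d (M + 2) ((δ + 1) ^ p - 1) := by
        rw [hexp, Finset.sum_range_succ']
        have h0 : δ ^ 0 * (1 : Matrix (Fin n) (Fin n) ℤ_[p]) ^ (p - 0) * (p.choose 0 : Matrix (Fin n) (Fin n) ℤ_[p]) = 1 := by simp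
        rw [h0, add_sub_cancel_right]
        intro i j
        rw [Matrix.sum_apply]
        exact Finset.dvd_sum fun k hk => hterm k hk i j
      rw [hβ]
      exact key
  -- divisibility estimate for differences of powers
  have hE : ∀ (M a b : ℕ), b ≤ a → p ^ M ∣ a - b → d M (α ^ a - α ^ b) := by
    intro M a b hba hdvd
    rcases hdvd with ⟨j, hj⟩
    have ha : a = b + p ^ M * j := by omega
    have h1 : α ^ a - α ^ b = α ^ b * (α ^ (p ^ M * j) - 1) := by
      rw [ha, pow_add]; noncomm_ring
    rw [h1]
    refine dmul_left _ ?_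
    rw [pow_mul]
    exact dgeom (dmono (Nat.le_succ M) (core M)) j
  -- norm version of the estimate
  have hEnorm : ∀ (M a b : ℕ), ‖((a : ℤ_[p]) - (b : ℤ_[p]))‖ ≤ (p : ℝ) ^ (-(M : ℤ)) →
      ∀ i j, ‖(α ^ a) i j - (α ^ b) i j‖ ≤ (p : ℝ) ^ (-(M : ℤ)) := by
    intro M a b hab i j
    have h1 : ((a : ℤ_[p]) - (b : ℤ_[p])) = (((a : ℤ) - b : ℤ) : ℤ_[p]) := by push_cast; ring
    rw [h1] at hab
    have h2 : (p : ℤ) ^ M ∣ (a : ℤ) - b := by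
      rwa [PadicInt.norm_int_le_pow_iff_dvd] at hab
    have main : ∀ a b : ℕ, b ≤ a → (p : ℤ) ^ M ∣ (a : ℤ) - b →
        ‖(α ^ a) i j - (α ^ b) i j‖ ≤ (p : ℝ) ^ (-(M : ℤ)) := by
      intro a b hba hdvd
      have h3 : ((a - b : ℕ) : ℤ) = (a : ℤ) - b := by omega
      rw [← h3] at hdvd
      have hnd : p ^ M ∣ a - b := by exact_mod_cast hdvd
      have hd := hE M a b hba hnd
      have hmem : (α ^ a - α ^ b) i j ∈ (Ideal.span {(p : ℤ_[p]) ^ M} : Ideal ℤ_[p]) :=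
        Ideal.mem_span_singleton.mpr (hd i j)
      have := (PadicInt.norm_le_pow_iff_mem_span_pow _ M).mpr hmem
      simpa [Matrix.sub_apply] using this
    rcases le_total b a with h | h
    · exact main a b h h2
    · have h2' : (p : ℤ) ^ M ∣ (b : ℤ) - a := by
        rw [show (b : ℤ) - a = -((a : ℤ) - b) by ring]
        exact dvd_neg.mpr h2
      have := main b a h h2'
      rwa [norm_sub_rev] at this
  -- basic real-power facts
  have hpos : ∀ M : ℕ, (0 : ℝ) < (p : ℝ) ^ (-(M : ℤ)) := fun M => zpow_pos hpR0 _
  have hmonoR : ∀ {N m : ℕ}, N ≤ m → (p : ℝ) ^ (-(m : ℤ)) ≤ (p : ℝ) ^ (-(N : ℤ)) := by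
    intro N m h
    apply zpow_le_zpow_right₀ (le_of_lt hpR)
    omega
  have hlim0 : Tendsto (fun m : ℕ => (p : ℝ) ^ (-(m : ℤ))) atTop (nhds 0) := by
    have heq : ∀ m : ℕ, (p : ℝ) ^ (-(m : ℤ)) = ((p : ℝ)⁻¹) ^ m := by
      intro m
      rw [zpow_neg, zpow_natCast, inv_pow]
    simp only [heq]
    exact tendsto_pow_atTop_nhds_zero_of_lt_one (by positivity)
      (by rw [inv_lt_one_iff₀]; right; exact hpR)
  have hsmall : ∀ ε : ℝ, 0 < ε → ∃ M : ℕ, (p : ℝ) ^ (-(M : ℤ)) < ε := by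
    intro ε hε
    exact (hlim0.eventually (gt_mem_nhds hε)).exists
  -- approximation facts
  have happr : ∀ (t : ℤ_[p]) (m : ℕ), ‖t - (t.appr m : ℤ_[p])‖ ≤ (p : ℝ) ^ (-(m : ℤ)) := by
    intro t m
    exact (PadicInt.norm_le_pow_iff_mem_span_pow _ m).mpr (PadicInt.appr_spec m t)
  have happr_tendsto : ∀ t : ℤ_[p], Tendsto (fun m => ((t.appr m : ℤ_[p]))) atTop (nhds t) := by
    intro t
    rw [Metric.tendsto_atTop]
    intro ε hε
    obtain ⟨M, hM⟩ := hsmall ε hε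
    refine ⟨M, fun m hm => ?_⟩
    calc dist ((t.appr m : ℤ_[p])) t = ‖t - (t.appr m : ℤ_[p])‖ := by
          rw [dist_eq_norm, norm_sub_rev]
      _ ≤ (p : ℝ) ^ (-(m : ℤ)) := happr t m
      _ ≤ (p : ℝ) ^ (-(M : ℤ)) := hmonoR hm
      _ < ε := hM
  -- closeness of appr exponents for nearby points
  have happr2 : ∀ (s t : ℤ_[p]) (M : ℕ), ‖s - t‖ ≤ (p : ℝ) ^ (-(M : ℤ)) → ∀ m, M ≤ m →
      ‖((s.appr m : ℤ_[p]) - (t.appr m : ℤ_[p]))‖ ≤ (p : ℝ) ^ (-(M : ℤ)) := by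
    intro s t M hst m hm
    have hdecomp : (s.appr m : ℤ_[p]) - (t.appr m : ℤ_[p]) =
        ((s.appr m : ℤ_[p]) - s) + ((s - t) + (t - (t.appr m : ℤ_[p]))) := by ring
    rw [hdecomp]
    refine le_trans (PadicInt.nonarchimedean _ _) (max_le ?_ ?_)
    · rw [norm_sub_rev]
      exact le_trans (happr s m) (hmonoR hm)
    · exact le_trans (PadicInt.nonarchimedean _ _)
        (max_le hst (le_trans (happr t m) (hmonoR hm)))
  -- construct the limit function
  have cauchy : ∀ (t : ℤ_[p]) (i j : Fin n),
      ∃ a : ℤ_[p], Tendsto (fun m => (α ^ t.appr m) i j) atTop (nhds a) := by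
    intro t i j
    apply cauchySeq_tendsto_of_complete
    rw [Metric.cauchySeq_iff']
    intro ε hε
    obtain ⟨M, hM⟩ := hsmall ε hε
    refine ⟨M, fun m hm => ?_⟩
    rw [dist_eq_norm]
    refine lt_of_le_of_lt (hEnorm M _ _ ?_ i j) hM
    have hdec : ((t.appr m : ℤ_[p])) - (t.appr M : ℤ_[p]) =
        ((t.appr m : ℤ_[p]) - t) + (t - (t.appr M : ℤ_[p])) := by ring
    rw [hdec]
    refine le_trans (PadicInt.nonarchimedean _ _) (max_le ?_ (happr t M))
    rw [norm_sub_rev]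
    exact le_trans (happr t m) (hmonoR hm)
  choose F hF using cauchy
  set f : ℤ_[p] → Matrix (Fin n) (Fin n) ℤ_[p] := fun t => Matrix.of (F t) with hfdef
  have hfa : ∀ (t : ℤ_[p]) (i j : Fin n), f t i j = F t i j := fun _ _ _ => rfl
  -- general convergence lemma
  have conv : ∀ (t : ℤ_[p]) (k : ℕ → ℕ), Tendsto (fun m => ((k m : ℤ_[p]))) atTop (nhds t) →
      ∀ i j, Tendsto (fun m => (α ^ k m) i j) atTop (nhds (f t i j)) := by
    intro t k hk i j
    have hdiff : Tendsto (fun m => (α ^ k m) i j - (α ^ t.appr m) i j) atTop (nhds 0) := by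
      rw [NormedAddCommGroup.tendsto_nhds_zero]
      intro ε hε
      obtain ⟨M, hM⟩ := hsmall ε hε
      have hev1 : ∀ᶠ m in atTop, ((k m : ℤ_[p])) ∈ Metric.ball t ((p : ℝ) ^ (-(M : ℤ))) :=
        hk (Metric.ball_mem_nhds t (hpos M))
      filter_upwards [hev1, eventually_ge_atTop M] with m h1 h2
      refine lt_of_le_of_lt (hEnorm M _ _ ?_ i j) hM
      have hdec : ((k m : ℤ_[p])) - (t.appr m : ℤ_[p]) =
          (((k m : ℤ_[p])) - t) + (t - (t.appr m : ℤ_[p])) := by ring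
      rw [hdec]
      refine le_trans (PadicInt.nonarchimedean _ _) (max_le ?_ ?_)
      · rw [← dist_eq_norm]
        exact le_of_lt (Metric.mem_ball.mp h1)
      · exact le_trans (happr t m) (hmonoR h2)
    have h := hdiff.add (hF t i j)
    simpa [hfa] using h
  -- f on natural numbers
  have fnat : ∀ k : ℕ, f (k : ℤ_[p]) = α ^ k := by
    intro k
    ext i j
    exact tendsto_nhds_unique (conv (k : ℤ_[p]) (fun _ => k) tendsto_const_nhds i j)
      tendsto_const_nhds
  have f0 : f 0 = 1 := by
    have := fnat 0
    simpa using this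
  have f1 : f 1 = α := by
    have := fnat 1
    simpa using this
  -- multiplicativity
  have hmul : ∀ s t : ℤ_[p], f (s + t) = f s * f t := by
    intro s t
    ext i j
    have hk : Tendsto (fun m => ((s.appr m + t.appr m : ℕ) : ℤ_[p])) atTop (nhds (s + t)) := by
      simp only [Nat.cast_add]
      exact (happr_tendsto s).add (happr_tendsto t)
    have h1 := conv (s + t) _ hk i j
    have hfun : (fun m => (α ^ (s.appr m + t.appr m)) i j) =
        fun m => ∑ l, (α ^ s.appr m) i l * (α ^ t.appr m) l j := by
      funext m
      rw [pow_add, Matrix.mul_apply]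
    rw [hfun] at h1
    have h2 : Tendsto (fun m => ∑ l, (α ^ s.appr m) i l * (α ^ t.appr m) l j) atTop
        (nhds (∑ l, F s i l * F t l j)) :=
      tendsto_finset_sum _ fun l _ => ((hF s i l).mul (hF t l j))
    have hu := tendsto_nhds_unique h1 h2
    rw [Matrix.mul_apply]
    exact hu
  -- units
  have hunit : ∀ t : ℤ_[p], IsUnit (f t) := by
    intro t
    have h1 : f t * f (-t) = 1 := by rw [← hmul]; simpa using f0
    have h2 : f (-t) * f t = 1 := by rw [← hmul]; simpa using f0
    exact ⟨⟨f t, f (-t), h1, h2⟩, rfl⟩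
  -- uniform continuity estimate
  have hUC : ∀ (M : ℕ) (s t : ℤ_[p]), ‖s - t‖ ≤ (p : ℝ) ^ (-(M : ℤ)) →
      ∀ i j, ‖f s i j - f t i j‖ ≤ (p : ℝ) ^ (-(M : ℤ)) := by
    intro M s t hst i j
    have key : ∀ m ≥ M, ‖(α ^ s.appr m) i j - (α ^ t.appr m) i j‖ ≤ (p : ℝ) ^ (-(M : ℤ)) :=
      fun m hm => hEnorm M _ _ (happr2 s t M hst m hm) i j
    have hlim : Tendsto (fun m => ‖(α ^ s.appr m) i j - (α ^ t.appr m) i j‖) atTop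
        (nhds ‖f s i j - f t i j‖) := by
      simpa [hfa] using ((hF s i j).sub (hF t i j)).norm
    exact le_of_tendsto hlim (eventually_atTop.mpr ⟨M, key⟩)
  -- continuity
  have fc : Continuous f := by
    apply continuous_matrix
    intro i j
    rw [Metric.continuous_iff]
    intro t ε hε
    obtain ⟨M, hM⟩ := hsmall ε hε
    refine ⟨(p : ℝ) ^ (-(M : ℤ)), hpos M, fun s hs => ?_⟩
    calc dist (f s i j) (f t i j) = ‖f s i j - f t i j‖ := dist_eq_norm _ _
      _ ≤ (p : ℝ) ^ (-(M : ℤ)) := hUC M s t (by rw [← dist_eq_norm]; exact le_of_lt hs) i j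
      _ < ε := hM
  exact ⟨f, fc, f0, hmul, f1, fnat, hunit⟩
end
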